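/- arXiv:2601.09203 — 9 statements merged into one kernel-verified Lean document; each statement's English description precedes it below -/
import Mathlib

section
/- Let η_a, η_b, α_a, α_b be real numbers. If x, x' are real numbers in the interval [(1+η_a−|α_a|)/2, (1+η_a+|α_a|)/2] and y, y' are real numbers in the interval [(1+η_b−|α_b|)/2, (1+η_b+|α_b|)/2], then −|α_a·α_b| ≤ x·y − x·y' + x'·y + x'·y' − (1+η_b)·x' − (1+η_a)·y + ((1+η_a)(1+η_b) − |α_a·α_b|)/2 ≤ 0. -/
/-! Centre every response probability at the midpoint of its interval: `x = (1 + ηa)/2 + u`,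
`x' = (1 + ηa)/2 + u'`, `y = (1 + ηb)/2 + v`, `y' = (1 + ηb)/2 + v'`. The Clauser–Horne expression
becomes `u (v - v') + u' (v + v') - |αa αb|/2` with `|u|, |u'| ≤ |αa|/2` and `|v|, |v'| ≤ |αb|/2`,
and the usual CHSH estimate `|v - v'| + |v + v'| = 2 max |v| |v'|` bounds the first two terms
by `|αa αb|/2` in absolute value. -/

section CHSH

variable {u u' v v' A B : ℝ}

lemma abs_sub_add_abs_add_le (hv : |v| ≤ B) (hv' : |v'| ≤ B) :
    |v - v'| + |v + v'| ≤ 2 * B := by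
  rcases abs_le.mp hv with ⟨hv₁, hv₂⟩
  rcases abs_le.mp hv' with ⟨hv'₁, hv'₂⟩
  rcases abs_cases (v - v') with ⟨hsub, -⟩ | ⟨hsub, -⟩ <;>
    rcases abs_cases (v + v') with ⟨hadd, -⟩ | ⟨hadd, -⟩ <;> linarith

lemma abs_chsh_le (hu : |u| ≤ A) (hu' : |u'| ≤ A) (hv : |v| ≤ B) (hv' : |v'| ≤ B) :
    |u * (v - v') + u' * (v + v')| ≤ 2 * (A * B) :=
  calc |u * (v - v') + u' * (v + v')|
      ≤ |u| * |v - v'| + |u'| * |v + v'| := by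
        simpa only [abs_mul] using abs_add_le (u * (v - v')) (u' * (v + v'))
    _ ≤ A * |v - v'| + A * |v + v'| := by gcongr
    _ = A * (|v - v'| + |v + v'|) := by ring
    _ ≤ A * (2 * B) := by
        gcongr
        · exact (abs_nonneg u).trans hu
        · exact abs_sub_add_abs_add_le hv hv'
    _ = 2 * (A * B) := by ring

end CHSH

lemma abs_sub_half_le_of_mem_Icc {x c r : ℝ} (hx : x ∈ Set.Icc ((c - r) / 2) ((c + r) / 2)) :
    |x - c / 2| ≤ r / 2 :=
  abs_le.mpr ⟨by linarith [hx.1], by linarith [hx.2]⟩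

/-- Pointwise (per hidden variable) generalized Clauser–Horne inequality:
the response probabilities `x, x'` of party A lie between the extreme eigenvalues
`(1+ηa−|αa|)/2` and `(1+ηa+|αa|)/2` of the biased unsharp POVM element, and
similarly `y, y'` for party B; then the CH expression lies in `[−|αa·αb|, 0]`. -/
theorem generalized_CH_pointwise (ηa ηb αa αb x x' y y' : ℝ)
    (hx : x ∈ Set.Icc ((1 + ηa - |αa|) / 2) ((1 + ηa + |αa|) / 2))
    (hx' : x' ∈ Set.Icc ((1 + ηa - |αa|) / 2) ((1 + ηa + |αa|) / 2))
    (hy : y ∈ Set.Icc ((1 + ηb - |αb|) / 2) ((1 + ηb + |αb|) / 2))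
    (hy' : y' ∈ Set.Icc ((1 + ηb - |αb|) / 2) ((1 + ηb + |αb|) / 2)) :
    -|αa * αb| ≤
      x * y - x * y' + x' * y + x' * y' - (1 + ηb) * x' - (1 + ηa) * y
        + ((1 + ηa) * (1 + ηb) - |αa * αb|) / 2 ∧
    x * y - x * y' + x' * y + x' * y' - (1 + ηb) * x' - (1 + ηa) * y
        + ((1 + ηa) * (1 + ηb) - |αa * αb|) / 2 ≤ 0 := by
  set u := x - (1 + ηa) / 2
  set u' := x' - (1 + ηa) / 2
  set v := y - (1 + ηb) / 2
  set v' := y' - (1 + ηb) / 2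
  have hcentred : x * y - x * y' + x' * y + x' * y' - (1 + ηb) * x' - (1 + ηa) * y
      + ((1 + ηa) * (1 + ηb) - |αa * αb|) / 2
      = u * (v - v') + u' * (v + v') - |αa * αb| / 2 := by ring
  have hchsh : |u * (v - v') + u' * (v + v')| ≤ |αa * αb| / 2 :=
    calc |u * (v - v') + u' * (v + v')|
        ≤ 2 * (|αa| / 2 * (|αb| / 2)) :=
          abs_chsh_le (abs_sub_half_le_of_mem_Icc hx) (abs_sub_half_le_of_mem_Icc hx')
            (abs_sub_half_le_of_mem_Icc hy) (abs_sub_half_le_of_mem_Icc hy')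
      _ = |αa * αb| / 2 := by rw [abs_mul]; ring
  rw [hcentred]
  constructor <;> linarith [abs_le.mp hchsh]
end

section
/- Let X be a real random variable on a probability space taking values almost surely in a bounded interval [A, B] with A ≤ B, and let m = E[X]. Then the third central moment satisfies |E[(X − m)³]| ≤ (B − A)³/8. -/
/-!
Centre at the mean, so that `u = X - m` has mean zero and ranges over `[-a, b]` with
`a + b = B - A`. For a cubic `p(u) = -u³ + βu + γ` that is nonnegative on `[-a, b]`,
taking expectations kills the linear term and gives `E[u³] ≤ γ`. Two such cubics suffice:
`(b - u)(u + b/2)²` gives `E[u³] ≤ b³/4`, and, when `2a ≤ b`, `(b - u)(u + a)(u + b - a)` gives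
`E[u³] ≤ ab(b - a)`. The first is at most `(a + b)³/8` when `b < 2a`, the second always;
the lower bound is the upper bound for `-u`.
-/

open MeasureTheory

lemma cube_le_of_le {u b : ℝ} (hu : u ≤ b) : u ^ 3 ≤ 3 * b ^ 2 / 4 * u + b ^ 3 / 4 := by
  nlinarith [mul_nonneg (sub_nonneg.2 hu) (sq_nonneg (u + b / 2))]

lemma cube_le_of_mem_Icc {u a b : ℝ} (hu : u ∈ Set.Icc (-a) b) (hab : 2 * a ≤ b) :
    u ^ 3 ≤ ((b - a) ^ 2 + a * b) * u + a * b * (b - a) := by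
  have hua : 0 ≤ u + a := by linarith [hu.1]
  nlinarith [mul_nonneg (mul_nonneg (sub_nonneg.2 hu.2) hua) (by linarith : 0 ≤ u + b - a)]

section Centered

variable {Ω : Type*} [MeasurableSpace Ω] {μ : Measure Ω} [IsProbabilityMeasure μ]

lemma integral_le_of_ae_le_affine {u g : Ω → ℝ} (hu : Integrable u μ) (hg : Integrable g μ)
    (hmean : ∫ ω, u ω ∂μ = 0) {β γ : ℝ} (h : ∀ᵐ ω ∂μ, g ω ≤ β * u ω + γ) :
    ∫ ω, g ω ∂μ ≤ γ := by
  have hint : ∫ ω, g ω ∂μ ≤ ∫ ω, (β * u ω + γ) ∂μ :=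
    integral_mono_ae hg ((hu.const_mul β).add (integrable_const γ)) h
  rwa [integral_add (hu.const_mul β) (integrable_const γ), integral_const_mul, hmean,
    integral_const, probReal_univ, one_smul, mul_zero, zero_add] at hint

lemma integral_cube_le {u : Ω → ℝ} (hu : AEMeasurable u μ) {a b : ℝ} (ha : 0 ≤ a) (hb : 0 ≤ b)
    (hmem : ∀ᵐ ω ∂μ, u ω ∈ Set.Icc (-a) b) (hmean : ∫ ω, u ω ∂μ = 0) :
    ∫ ω, u ω ^ 3 ∂μ ≤ (a + b) ^ 3 / 8 := by
  have hodd : Odd 3 := by decide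
  have hu_int : Integrable u μ := .of_mem_Icc (-a) b hu hmem
  have hcube_int : Integrable (fun ω ↦ u ω ^ 3) μ :=
    .of_mem_Icc ((-a) ^ 3) (b ^ 3) (hu.pow_const 3) <| hmem.mono fun _ h ↦
      ⟨hodd.pow_le_pow.2 h.1, hodd.pow_le_pow.2 h.2⟩
  have h_quarter : ∫ ω, u ω ^ 3 ∂μ ≤ b ^ 3 / 4 :=
    integral_le_of_ae_le_affine hu_int hcube_int hmean <| hmem.mono fun _ h ↦ cube_le_of_le h.2
  rcases le_or_gt (2 * a) b with hab | hab
  · have h_two_point : ∫ ω, u ω ^ 3 ∂μ ≤ a * b * (b - a) :=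
      integral_le_of_ae_le_affine hu_int hcube_int hmean <|
        hmem.mono fun _ h ↦ cube_le_of_mem_Icc h hab
    nlinarith [mul_nonneg ha (sq_nonneg (a + b)), mul_nonneg hb (sq_nonneg (5 * a - 2 * b)),
      mul_nonneg (mul_nonneg ha ha) ha, mul_nonneg (mul_nonneg ha ha) hb]
  · nlinarith [mul_nonneg (mul_nonneg hb hb) hb, mul_nonneg (mul_nonneg ha hb) hb,
      mul_nonneg (mul_nonneg ha ha) hb, mul_nonneg (mul_nonneg ha ha) ha]

lemma abs_integral_cube_le {u : Ω → ℝ} (hu : AEMeasurable u μ) {a b : ℝ} (ha : 0 ≤ a)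
    (hb : 0 ≤ b) (hmem : ∀ᵐ ω ∂μ, u ω ∈ Set.Icc (-a) b) (hmean : ∫ ω, u ω ∂μ = 0) :
    |∫ ω, u ω ^ 3 ∂μ| ≤ (a + b) ^ 3 / 8 := by
  have hneg := integral_cube_le hu.neg hb ha
    (hmem.mono fun _ h ↦ ⟨neg_le_neg h.2, neg_le.1 h.1⟩)
    (by simp only [Pi.neg_apply, integral_neg, hmean, neg_zero])
  simp only [Pi.neg_apply, Odd.neg_pow (by decide : Odd 3), integral_neg, add_comm b a] at hneg
  exact abs_le.2 ⟨by linarith, integral_cube_le hu ha hb hmem hmean⟩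

end Centered

theorem third_central_moment_bound_general {Ω : Type*} [MeasurableSpace Ω] (μ : Measure Ω)
    [IsProbabilityMeasure μ] (X : Ω → ℝ) (hX : Measurable X) (A B : ℝ)
    (hbound : ∀ᵐ ω ∂μ, X ω ∈ Set.Icc A B) :
    |∫ ω, (X ω - ∫ ω', X ω' ∂μ) ^ 3 ∂μ| ≤ (B - A) ^ 3 / 8 := by
  have hX_int : Integrable X μ := .of_mem_Icc A B hX.aemeasurable hbound
  set m := ∫ ω, X ω ∂μ
  have hm : m ∈ Set.Icc A B := (convex_Icc A B).integral_mem isClosed_Icc hbound hX_int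
  have hmean : ∫ ω, (X ω - m) ∂μ = 0 := by
    rw [integral_sub hX_int (integrable_const m), integral_const, probReal_univ, one_smul,
      sub_self]
  have hcentered := abs_integral_cube_le (hX.aemeasurable.sub_const m) (sub_nonneg.2 hm.1)
    (sub_nonneg.2 hm.2) (hbound.mono fun _ h ↦ ⟨by linarith [h.1], by linarith [h.2]⟩) hmean
  rwa [sub_add_sub_cancel'] at hcentered

/-- For a real random variable supported a.s. in `[A, B]`, the third central
moment (skewness, third cumulant) satisfies `|E[(X − m)³]| ≤ (B − A)³ / 8`. -/
theorem third_central_moment_bound {Ω : Type*} [MeasurableSpace Ω] (μ : Measure Ω)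
    [IsProbabilityMeasure μ] (X : Ω → ℝ) (hX : Measurable X) (A B : ℝ) (hAB : A ≤ B)
    (hbound : ∀ᵐ ω ∂μ, X ω ∈ Set.Icc A B) :
    |∫ ω, (X ω - ∫ ω', X ω' ∂μ) ^ 3 ∂μ| ≤ (B - A) ^ 3 / 8 :=
  third_central_moment_bound_general μ X hX A B hbound
end

section
/- Let X be a real random variable on a probability space taking values almost surely in a bounded interval [A, B] with A ≤ B, and let m = E[X]. Then the fourth central moment satisfies E[(X − m)⁴] ≤ (B − A)⁴/12. -/
/-!
With `a = m - A` and `b = B - m`, the centred variable `Y = X - m` lies in `[-a, b]`,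
where `y ↦ y⁴` lies below its chord `y ↦ b⁴ + (a² + b²)(b - a)(y - b)`. Since `E[Y] = 0`,
integrating the chord gives `E[Y⁴] ≤ ab(a² - ab + b²)`, and this is at most `(a + b)⁴ / 12` because
`(a + b)⁴ - 12ab(a² - ab + b²) = (a² - 4ab + b²)²`.
-/

open MeasureTheory

lemma pow_four_le_chord {a b y : ℝ} (hy : y ∈ Set.Icc (-a) b) :
    y ^ 4 ≤ b ^ 4 + (a ^ 2 + b ^ 2) * (b - a) * (y - b) := by
  have hfactor : b ^ 4 + (a ^ 2 + b ^ 2) * (b - a) * (y - b) - y ^ 4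
      = (b - y) * (y + a) * (y ^ 2 + (b - a) * y + (a ^ 2 - a * b + b ^ 2)) := by ring
  have hquad : 0 ≤ y ^ 2 + (b - a) * y + (a ^ 2 - a * b + b ^ 2) := by
    nlinarith [sq_nonneg (2 * y + b - a), sq_nonneg (a - b), sq_nonneg a, sq_nonneg b]
  have hprod := mul_nonneg (mul_nonneg (sub_nonneg.2 hy.2) (neg_le_iff_add_nonneg.1 hy.1)) hquad
  linarith

theorem fourth_central_moment_bound_general {Ω : Type*} [MeasurableSpace Ω] (μ : Measure Ω)
    [IsProbabilityMeasure μ] (X : Ω → ℝ) (hX : Measurable X) (A B : ℝ)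
    (hbound : ∀ᵐ ω ∂μ, X ω ∈ Set.Icc A B) :
    (∫ ω, (X ω - ∫ ω', X ω' ∂μ) ^ 4 ∂μ) ≤ (B - A) ^ 4 / 12 := by
  set m := ∫ ω', X ω' ∂μ
  set a := m - A
  set b := B - m
  set s := (a ^ 2 + b ^ 2) * (b - a) with hs
  have hXint : Integrable X μ := .of_mem_Icc A B hX.aemeasurable hbound
  have hchord : ∀ᵐ ω ∂μ, (X ω - m) ^ 4 ≤ b ^ 4 - s * (m + b) + s * X ω := by
    filter_upwards [hbound] with ω hω
    linarith [pow_four_le_chord (a := a) (b := b) (y := X ω - m)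
      ⟨by linarith [hω.1], by linarith [hω.2]⟩]
  calc ∫ ω, (X ω - m) ^ 4 ∂μ
      ≤ ∫ ω, b ^ 4 - s * (m + b) + s * X ω ∂μ :=
        integral_mono_of_nonneg (.of_forall fun ω => by positivity)
          ((integrable_const _).add (hXint.const_mul s)) hchord
    _ = b ^ 4 - s * (m + b) + s * m := by
        rw [integral_add (integrable_const _) (hXint.const_mul s), integral_const,
          integral_const_mul, probReal_univ, one_smul]
    _ = a * b * (a ^ 2 - a * b + b ^ 2) := by rw [hs]; ring
    _ ≤ (a + b) ^ 4 / 12 := by nlinarith [sq_nonneg (a ^ 2 - 4 * a * b + b ^ 2)]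
    _ = (B - A) ^ 4 / 12 := by ring

/-- For a real random variable supported a.s. in `[A, B]`, the fourth central
moment satisfies `E[(X − m)⁴] ≤ (B − A)⁴ / 12`. -/
theorem fourth_central_moment_bound {Ω : Type*} [MeasurableSpace Ω] (μ : Measure Ω)
    [IsProbabilityMeasure μ] (X : Ω → ℝ) (hX : Measurable X) (A B : ℝ) (hAB : A ≤ B)
    (hbound : ∀ᵐ ω ∂μ, X ω ∈ Set.Icc A B) :
    (∫ ω, (X ω - ∫ ω', X ω' ∂μ) ^ 4 ∂μ) ≤ (B - A) ^ 4 / 12 :=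
  fourth_central_moment_bound_general μ X hX A B hbound
end

section
/- Let α ∈ ℝ and let X be a real random variable on a probability space taking values almost surely in the interval [−α², 0], with mean m = E[X]. Then the fourth central moment satisfies E[(X − m)⁴] ≤ α⁸/12. -/
/-!
On `[a, b]` the convex function `x ↦ (x - m)⁴` lies below its chord, and the chord is affine, so
taking expectations with `m = E[X]` bounds `(b - a) · E[(X - m)⁴]` by the chord evaluated at the
mean, `(b - m)(a - m)⁴ + (m - a)(b - m)⁴`. Writing `p = (b - m)(m - a)`, this equals
`(b - a) p ((b - a)² - 3p)`, whose maximum `(b - a)⁵ / 12` is attained at `p = (b - a)² / 6`.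
-/

open MeasureTheory ProbabilityTheory Set

lemma pow_four_sub_le_chord {a b x : ℝ} (hx : x ∈ Icc a b) (m : ℝ) :
    (b - a) * (x - m) ^ 4 ≤ (b - x) * (a - m) ^ 4 + (x - a) * (b - m) ^ 4 := by
  -- the gap is `(b - x)(x - a)(b - a)` times the second divided difference of `t ↦ (t - m)⁴`
  have gap : (b - x) * (a - m) ^ 4 + (x - a) * (b - m) ^ 4 - (b - a) * (x - m) ^ 4
      = (b - x) * (x - a) * (b - a) *
        (((a - m) + (x - m)) ^ 2 + ((x - m) + (b - m)) ^ 2 + ((b - m) + (a - m)) ^ 2) / 2 := by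
    ring
  have hfactor : 0 ≤ (b - x) * (x - a) * (b - a) :=
    mul_nonneg (mul_nonneg (sub_nonneg.2 hx.2) (sub_nonneg.2 hx.1))
      (sub_nonneg.2 (hx.1.trans hx.2))
  have : 0 ≤ (b - x) * (x - a) * (b - a) *
      (((a - m) + (x - m)) ^ 2 + ((x - m) + (b - m)) ^ 2 + ((b - m) + (a - m)) ^ 2) / 2 := by
    positivity
  linarith

lemma chord_pow_four_at_mem_Icc_le {a b m : ℝ} (hm : m ∈ Icc a b) :
    (b - m) * (a - m) ^ 4 + (m - a) * (b - m) ^ 4 ≤ (b - a) ^ 5 / 12 := by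
  have key : (b - m) * (a - m) ^ 4 + (m - a) * (b - m) ^ 4
      = (b - a) ^ 5 / 12 - 3 * (b - a) * ((b - m) * (m - a) - (b - a) ^ 2 / 6) ^ 2 := by
    ring
  have := mul_nonneg (sub_nonneg.2 (hm.1.trans hm.2))
    (sq_nonneg ((b - m) * (m - a) - (b - a) ^ 2 / 6))
  linarith

section Expectation

variable {Ω : Type*} [MeasurableSpace Ω] {μ : Measure Ω} [IsProbabilityMeasure μ]

lemma integral_mem_Icc_of_ae_mem_Icc {a b : ℝ} {X : Ω → ℝ} (hX : AEMeasurable X μ)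
    (h : ∀ᵐ ω ∂μ, X ω ∈ Icc a b) : μ[X] ∈ Icc a b := by
  have hXi := Integrable.of_mem_Icc a b hX h
  constructor
  · simpa using integral_mono_ae (integrable_const a) hXi (h.mono fun _ hω ↦ hω.1)
  · simpa using integral_mono_ae hXi (integrable_const b) (h.mono fun _ hω ↦ hω.2)

lemma integral_mul_add_const {X : Ω → ℝ} (hX : Integrable X μ) (p q : ℝ) :
    ∫ ω, p * X ω + q ∂μ = p * μ[X] + q := by
  rw [integral_add (hX.const_mul p) (integrable_const q), integral_const_mul]
  simp

theorem integral_sub_integral_pow_four_le {a b : ℝ} {X : Ω → ℝ} (hX : AEMeasurable X μ)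
    (h : ∀ᵐ ω ∂μ, X ω ∈ Icc a b) : ∫ ω, (X ω - μ[X]) ^ 4 ∂μ ≤ (b - a) ^ 4 / 12 := by
  set m := μ[X]
  have hXi := Integrable.of_mem_Icc a b hX h
  have hm : m ∈ Icc a b := integral_mem_Icc_of_ae_mem_Icc hX h
  have h4 : ∀ᵐ ω ∂μ, (X ω - m) ^ 4 ∈ Icc 0 ((b - a) ^ 4) := by
    filter_upwards [h] with ω hω
    refine ⟨by positivity, ?_⟩
    rw [← (show Even 4 by decide).pow_abs, ← Real.dist_eq]
    exact pow_le_pow_left₀ dist_nonneg (Real.dist_le_of_mem_Icc hω hm) 4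
  have h4i := Integrable.of_mem_Icc _ _ (by fun_prop) h4
  rcases (sub_nonneg.2 (hm.1.trans hm.2)).eq_or_lt with hab | hab
  · calc ∫ ω, (X ω - m) ^ 4 ∂μ ≤ (b - a) ^ 4 := by
          simpa using integral_mono_ae h4i (integrable_const _) (h4.mono fun _ hω ↦ hω.2)
      _ = (b - a) ^ 4 / 12 := by rw [← hab]; norm_num
  refine le_of_mul_le_mul_left ?_ hab
  calc (b - a) * ∫ ω, (X ω - m) ^ 4 ∂μ = ∫ ω, (b - a) * (X ω - m) ^ 4 ∂μ :=
        (integral_const_mul _ _).symm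
    _ ≤ ∫ ω, ((b - m) ^ 4 - (a - m) ^ 4) * X ω + (b * (a - m) ^ 4 - a * (b - m) ^ 4) ∂μ := by
        refine integral_mono_ae (h4i.const_mul _) (by fun_prop) ?_
        filter_upwards [h] with ω hω
        linarith [pow_four_sub_le_chord hω m]
    _ = (b - m) * (a - m) ^ 4 + (m - a) * (b - m) ^ 4 := by
        rw [integral_mul_add_const hXi]
        ring
    _ ≤ (b - a) ^ 5 / 12 := chord_pow_four_at_mem_Icc_le hm
    _ = (b - a) * ((b - a) ^ 4 / 12) := by ring

end Expectation

/-- Fourth central moment bound for the generalized Clauser–Horne functional under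
local realism: if `X` takes values a.s. in `[−α², 0]`, then `E[(X − m)⁴] ≤ α⁸/12`. -/
theorem CH_fourth_central_moment_bound {Ω : Type*} [MeasurableSpace Ω] (μ : Measure Ω)
    [IsProbabilityMeasure μ] (α : ℝ) (X : Ω → ℝ) (hX : Measurable X)
    (hbound : ∀ᵐ ω ∂μ, X ω ∈ Set.Icc (-α ^ 2) 0) :
    (∫ ω, (X ω - ∫ ω', X ω' ∂μ) ^ 4 ∂μ) ≤ α ^ 8 / 12 := by
  have := integral_sub_integral_pow_four_le hX.aemeasurable hbound
  rwa [zero_sub, neg_neg, ← pow_mul] at this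
end

section
/- Let a, a', b, b' ∈ ℝ³ be unit vectors and η_a, η_b, α_a, α_b real numbers, and let 𝓑 be the generalized Clauser–Horne operator built from these data. Then, as an identity of 4×4 complex matrices, 𝓑² + |α_a·α_b|·𝓑 = (α_a²·α_b²/16)·[σ·a, σ·a'] ⊗ [σ·b, σ·b'], where [X, Y] = XY − YX denotes the matrix commutator. -/
open Matrix Kronecker

noncomputable section

/-- The Pauli matrix σ₁. -/
def σ1 : Matrix (Fin 2) (Fin 2) ℂ := !![0, 1; 1, 0]

/-- The Pauli matrix σ₂. -/
def σ2 : Matrix (Fin 2) (Fin 2) ℂ := !![0, -Complex.I; Complex.I, 0]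

/-- The Pauli matrix σ₃. -/
def σ3 : Matrix (Fin 2) (Fin 2) ℂ := !![1, 0; 0, -1]

/-- `σ · n = n₁σ₁ + n₂σ₂ + n₃σ₃` for a real vector `n ∈ ℝ³`. -/
def pauliDot (n : Fin 3 → ℝ) : Matrix (Fin 2) (Fin 2) ℂ :=
  (n 0 : ℂ) • σ1 + (n 1 : ℂ) • σ2 + (n 2 : ℂ) • σ3

/-- Biased unsharp POVM element `E₊(n) = ((1+η)·I + α·σ·n)/2`. -/
def Eplus (η α : ℝ) (n : Fin 3 → ℝ) : Matrix (Fin 2) (Fin 2) ℂ :=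
  ((1 / 2 : ℝ) : ℂ) • (((1 + η : ℝ) : ℂ) • (1 : Matrix (Fin 2) (Fin 2) ℂ)
    + (α : ℂ) • pauliDot n)

/-- The generalized Clauser–Horne operator on ℂ²⊗ℂ². -/
def CHop (ηa ηb αa αb : ℝ) (a a' b b' : Fin 3 → ℝ) :
    Matrix (Fin 2 × Fin 2) (Fin 2 × Fin 2) ℂ :=
  Eplus ηa αa a ⊗ₖ Eplus ηb αb b - Eplus ηa αa a ⊗ₖ Eplus ηb αb b'
    + Eplus ηa αa a' ⊗ₖ Eplus ηb αb b + Eplus ηa αa a' ⊗ₖ Eplus ηb αb b'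
    - ((1 + ηb : ℝ) : ℂ) • (Eplus ηa αa a' ⊗ₖ (1 : Matrix (Fin 2) (Fin 2) ℂ))
    - ((1 + ηa : ℝ) : ℂ) • ((1 : Matrix (Fin 2) (Fin 2) ℂ) ⊗ₖ Eplus ηb αb b)
    + ((((1 + ηa) * (1 + ηb) - |αa * αb|) / 2 : ℝ) : ℂ) •
        (1 : Matrix (Fin 2 × Fin 2) (Fin 2 × Fin 2) ℂ)

end

/-!
Expanding the effects `E₊`, the bias terms cancel and `𝓑 = (κ/4)·C − (|κ|/2)·I` with `κ = α_a α_b`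
and `C = A⊗B − A⊗B' + A'⊗B + A'⊗B'` the CHSH operator of the observables `A = σ·a`, ….
These square to the identity for unit vectors, so Landau's identity
`C² = 4·I + [A, A'] ⊗ [B, B']` holds, and `|κ|² = κ²` makes the remaining terms cancel.
-/

namespace Matrix

variable {l m n p α : Type*} [NonUnitalNonAssocRing α]

theorem sub_kronecker (A₁ A₂ : Matrix l m α) (B : Matrix n p α) :
    (A₁ - A₂) ⊗ₖ B = A₁ ⊗ₖ B - A₂ ⊗ₖ B := by
  ext; simp [sub_mul]

theorem kronecker_sub (A : Matrix l m α) (B₁ B₂ : Matrix n p α) :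
    A ⊗ₖ (B₁ - B₂) = A ⊗ₖ B₁ - A ⊗ₖ B₂ := by
  ext; simp [mul_sub]

end Matrix

def chshOperator {R m n : Type*} [NonUnitalNonAssocRing R] (A A' : Matrix m m R)
    (B B' : Matrix n n R) : Matrix (m × n) (m × n) R :=
  A ⊗ₖ B - A ⊗ₖ B' + A' ⊗ₖ B + A' ⊗ₖ B'

theorem chshOperator_sq {R m n : Type*} [CommRing R] [Fintype m] [DecidableEq m] [Fintype n]
    [DecidableEq n] {A A' : Matrix m m R} {B B' : Matrix n n R}
    (hA : A * A = 1) (hA' : A' * A' = 1) (hB : B * B = 1) (hB' : B' * B' = 1) :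
    chshOperator A A' B B' ^ 2 = (4 : R) • 1 + (A * A' - A' * A) ⊗ₖ (B * B' - B' * B) := by
  have hsplit : chshOperator A A' B B' = A ⊗ₖ (B - B') + A' ⊗ₖ (B + B') := by
    simp only [chshOperator, kronecker_sub, kronecker_add]; abel
  rw [hsplit, sq]
  simp only [add_mul, mul_add, sub_mul, mul_sub, ← mul_kronecker_mul, hA, hA', hB, hB',
    kronecker_add, kronecker_sub, sub_kronecker, one_kronecker_one]
  module

theorem smul_sub_smul_one_sq_add_two_smul {R A : Type*} [CommRing R] [Ring A] [Algebra R A]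
    {C K : A} (hC : C ^ 2 = (4 : R) • 1 + K) {c e : R} (he : e ^ 2 = 4 * c ^ 2) :
    (c • C - e • 1) ^ 2 + (2 * e) • (c • C - e • 1) = c ^ 2 • K := by
  simp only [sq, sub_mul, mul_sub, mul_one, one_mul, smul_mul_assoc, mul_smul_comm]
  rw [← sq, hC]
  match_scalars
  · linear_combination -he
  · ring
  · ring

theorem pauliDot_mul_self (v : Fin 3 → ℝ) :
    pauliDot v * pauliDot v = ((v 0 ^ 2 + v 1 ^ 2 + v 2 ^ 2 : ℝ) : ℂ) • 1 := by
  ext i j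
  fin_cases i <;> fin_cases j <;>
    simp [pauliDot, σ1, σ2, σ3, Matrix.mul_apply, Fin.sum_univ_two] <;> ring_nf <;> simp [Complex.I_sq]

theorem pauliDot_mul_self_eq_one {v : Fin 3 → ℝ} (hv : v 0 ^ 2 + v 1 ^ 2 + v 2 ^ 2 = 1) :
    pauliDot v * pauliDot v = 1 := by
  rw [pauliDot_mul_self, hv, Complex.ofReal_one, one_smul]

theorem CHop_eq_smul_chshOperator (ηa ηb αa αb : ℝ) (a a' b b' : Fin 3 → ℝ) :
    CHop ηa ηb αa αb a a' b b' =
      ((αa * αb / 4 : ℝ) : ℂ) • chshOperator (pauliDot a) (pauliDot a') (pauliDot b) (pauliDot b')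
        - ((|αa * αb| / 2 : ℝ) : ℂ) • 1 := by
  simp only [CHop, Eplus, chshOperator, kronecker_add, add_kronecker, smul_kronecker,
    kronecker_smul, one_kronecker_one]
  push_cast
  module

/-- Operator identity for the square of the generalized Clauser–Horne operator. -/
theorem CHop_sq_identity (ηa ηb αa αb : ℝ) (a a' b b' : Fin 3 → ℝ)
    (ha : a 0 ^ 2 + a 1 ^ 2 + a 2 ^ 2 = 1) (ha' : a' 0 ^ 2 + a' 1 ^ 2 + a' 2 ^ 2 = 1)
    (hb : b 0 ^ 2 + b 1 ^ 2 + b 2 ^ 2 = 1) (hb' : b' 0 ^ 2 + b' 1 ^ 2 + b' 2 ^ 2 = 1) :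
    CHop ηa ηb αa αb a a' b b' ^ 2
        + ((|αa * αb| : ℝ) : ℂ) • CHop ηa ηb αa αb a a' b b'
      = ((αa ^ 2 * αb ^ 2 / 16 : ℝ) : ℂ) •
          ((pauliDot a * pauliDot a' - pauliDot a' * pauliDot a) ⊗ₖ
            (pauliDot b * pauliDot b' - pauliDot b' * pauliDot b)) := by
  have hC := chshOperator_sq (pauliDot_mul_self_eq_one ha) (pauliDot_mul_self_eq_one ha')
    (pauliDot_mul_self_eq_one hb) (pauliDot_mul_self_eq_one hb')
  have he : ((|αa * αb| / 2 : ℝ) : ℂ) ^ 2 = 4 * ((αa * αb / 4 : ℝ) : ℂ) ^ 2 := by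
    norm_cast
    rw [div_pow, sq_abs]
    ring
  rw [CHop_eq_smul_chshOperator]
  convert smul_sub_smul_one_sq_add_two_smul hC he using 3 <;> push_cast <;> ring
end

section
/- For every real k ≥ 1, ∫₀^∞ e^{−x₂} (∫_{x₂/k}^{k·x₂} e^{−x₁} dx₁) dx₂ = (k−1)/(k+1). Consequently, for every β ∈ [0, 1), taking k = (1+β)/(1−β) the value of this double integral equals β. -/
open MeasureTheory Real Set

/- The inner integral equals `e^{-x/k} - e^{-kx}`, so after multiplying by `e^{-x}` the outer
integrand is a difference of two decaying exponentials with rates `1 + 1/k` and `1 + k`. Hence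
the double integral is `1/(1 + 1/k) - 1/(1 + k) = (k - 1)/(k + 1)`, which for
`k = (1 + β)/(1 - β)` simplifies to `β`. -/

lemma intervalIntegral_exp_neg (a b : ℝ) : ∫ x in a..b, exp (-x) = exp (-a) - exp (-b) := by
  rw [intervalIntegral.integral_comp_neg exp, integral_exp]

lemma integral_Ioi_exp_neg_mul_intervalIntegral_exp_neg {k : ℝ} (hk : 0 < k) :
    ∫ x in Ioi (0 : ℝ), exp (-x) * ∫ y in (x / k)..(k * x), exp (-y) = (k - 1) / (k + 1) := by
  have hrate₁ : -(1 + 1 / k) < 0 := by linarith [one_div_pos.2 hk]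
  have hrate₂ : -(1 + k) < 0 := by linarith
  have hintegrand : ∀ x : ℝ, exp (-x) * ∫ y in (x / k)..(k * x), exp (-y)
      = exp (-(1 + 1 / k) * x) - exp (-(1 + k) * x) := fun x => by
    rw [intervalIntegral_exp_neg, mul_sub, ← exp_add, ← exp_add]
    congr 2 <;> ring
  simp_rw [hintegrand]
  rw [integral_sub (integrableOn_exp_mul_Ioi hrate₁ 0) (integrableOn_exp_mul_Ioi hrate₂ 0),
    integral_exp_mul_Ioi hrate₁, integral_exp_mul_Ioi hrate₂]
  simp only [mul_zero, exp_zero]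
  field_simp
  ring

/-- The fraction of spacelike separated decay events: for every `k ≥ 1`,
`∫₀^∞ e^{−x₂} (∫_{x₂/k}^{k·x₂} e^{−x₁} dx₁) dx₂ = (k−1)/(k+1)`; consequently for
`β ∈ [0,1)` and `k = (1+β)/(1−β)` the double integral equals `β`. -/
theorem spacelike_fraction :
    (∀ k : ℝ, 1 ≤ k →
      (∫ x₂ in Set.Ioi (0 : ℝ),
          Real.exp (-x₂) * ∫ x₁ in (x₂ / k)..(k * x₂), Real.exp (-x₁))
        = (k - 1) / (k + 1)) ∧
    (∀ β : ℝ, β ∈ Set.Ico (0 : ℝ) 1 →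
      (∫ x₂ in Set.Ioi (0 : ℝ),
          Real.exp (-x₂) *
            ∫ x₁ in (x₂ / ((1 + β) / (1 - β)))..(((1 + β) / (1 - β)) * x₂),
              Real.exp (-x₁))
        = β) := by
  refine ⟨fun k hk => integral_Ioi_exp_neg_mul_intervalIntegral_exp_neg (by linarith),
    fun β ⟨hβ₀, hβ₁⟩ => ?_⟩
  have hβ₁' : 0 < 1 - β := by linarith
  rw [integral_Ioi_exp_neg_mul_intervalIntegral_exp_neg (by positivity)]
  field_simp
  ring
end

section
/- Let α, φ ∈ ℝ. Let ρ = |ψ⟩⟨ψ| on ℂ²⊗ℂ² with |ψ⟩ = (|01⟩ − |10⟩)/√2, and let 𝓑 be the generalized Clauser–Horne operator with bias η_a = η_b = 0, unsharpness α_a = α, α_b = −α, and directions a = (1,0,0), a' = (0,1,0), b = (cos φ, sin φ, 0), b' = (−sin φ, cos φ, 0). Then Tr(ρ·𝓑) = (α²/2)·(cos φ + sin φ − 1). Moreover, for all φ, Tr(ρ·𝓑) ≤ (√2 − 1)·α²/2, with equality at φ = π/4. -/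
open Matrix Kronecker

noncomputable section

/-- The spin-singlet state vector `|ψ⟩ = (|01⟩ − |10⟩)/√2` on ℂ²⊗ℂ². -/
def singletVec : Fin 2 × Fin 2 → ℂ := fun i =>
  if i = (0, 1) then ((1 / Real.sqrt 2 : ℝ) : ℂ)
  else if i = (1, 0) then (-(1 / Real.sqrt 2 : ℝ) : ℂ) else 0

/-- The spin-singlet density matrix `ρ = |ψ⟩⟨ψ|`. -/
def singletRho : Matrix (Fin 2 × Fin 2) (Fin 2 × Fin 2) ℂ :=
  Matrix.of fun i j => singletVec i * (starRingEnd ℂ) (singletVec j)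

/-- The generalized CH operator with bias `0`, unsharpness `α, −α`, and directions
`a = (1,0,0)`, `a' = (0,1,0)`, `b = (cos φ, sin φ, 0)`, `b' = (−sin φ, cos φ, 0)`. -/
def Bop (α φ : ℝ) : Matrix (Fin 2 × Fin 2) (Fin 2 × Fin 2) ℂ :=
  CHop 0 0 α (-α) ![1, 0, 0] ![0, 1, 0] ![Real.cos φ, Real.sin φ, 0]
    ![-Real.sin φ, Real.cos φ, 0]

end

/-! For the singlet, `⟨σ·x ⊗ I⟩ = ⟨I ⊗ σ·y⟩ = 0` and `⟨σ·x ⊗ σ·y⟩ = -x·y`. Expanding `𝓑`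
bilinearly, the bias contributions of the four joint terms cancel against the two marginal terms,
so `Tr(ρ𝓑) = -αₐα_b (a·b - a·b' + a'·b + a'·b')/4 - |αₐα_b|/2`. For the given directions the
CHSH combination is `2 (cos φ + sin φ)`, and `cos φ + sin φ ≤ √2` because
`(cos φ + sin φ)² + (cos φ - sin φ)² = 2`, with equality at `φ = π/4`. -/

open Real

theorem trace_singletRho_mul (M : Matrix (Fin 2 × Fin 2) (Fin 2 × Fin 2) ℂ) :
    trace (singletRho * M) =
      (M (0, 1) (0, 1) - M (0, 1) (1, 0) - M (1, 0) (0, 1) + M (1, 0) (1, 0)) / 2 := by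
  have hsqrt : ((√2 : ℝ) : ℂ) ^ 2 = 2 := by
    rw [← Complex.ofReal_pow, sq_sqrt zero_le_two]; norm_num
  simp only [trace, diag, mul_apply, singletRho, singletVec, of_apply, Fintype.sum_prod_type,
    Fin.sum_univ_two, Fin.isValue, Prod.mk.injEq, zero_ne_one, one_ne_zero, and_false, and_true,
    ↓reduceIte, map_zero, map_neg, map_inv₀, one_div, Complex.ofReal_inv,
    Complex.conj_ofReal, mul_zero, zero_mul, add_zero, zero_add, mul_neg, neg_mul, neg_zero, neg_neg]
  field_simp
  rw [hsqrt]
  ring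

theorem trace_singletRho : trace singletRho = 1 := by
  simpa [one_apply] using trace_singletRho_mul 1

theorem pauliDot_eq (n : Fin 3 → ℝ) :
    pauliDot n = !![(n 2 : ℂ), n 0 - n 1 * Complex.I; n 0 + n 1 * Complex.I, -n 2] := by
  ext i j
  fin_cases i <;> fin_cases j <;> simp [pauliDot, σ1, σ2, σ3, sub_eq_add_neg, mul_comm]

theorem trace_singletRho_mul_pauliDot_kronecker_pauliDot (x y : Fin 3 → ℝ) :
    trace (singletRho * (pauliDot x ⊗ₖ pauliDot y)) = -((x ⬝ᵥ y : ℝ) : ℂ) := by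
  simp only [trace_singletRho_mul, pauliDot_eq, kroneckerMap_apply, of_apply, cons_val',
    cons_val_zero, cons_val_one, cons_val_fin_one, dotProduct, Fin.sum_univ_three]
  push_cast
  linear_combination (x 1 * y 1 : ℂ) * Complex.I_sq

theorem trace_singletRho_mul_pauliDot_kronecker_one (x : Fin 3 → ℝ) :
    trace (singletRho * (pauliDot x ⊗ₖ (1 : Matrix (Fin 2) (Fin 2) ℂ))) = 0 := by
  simp [trace_singletRho_mul, pauliDot_eq, one_apply]

theorem trace_singletRho_mul_one_kronecker_pauliDot (y : Fin 3 → ℝ) :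
    trace (singletRho * ((1 : Matrix (Fin 2) (Fin 2) ℂ) ⊗ₖ pauliDot y)) = 0 := by
  simp [trace_singletRho_mul, pauliDot_eq, one_apply]

theorem trace_singletRho_mul_Eplus_kronecker_Eplus (ηa ηb αa αb : ℝ) (x y : Fin 3 → ℝ) :
    trace (singletRho * (Eplus ηa αa x ⊗ₖ Eplus ηb αb y)) =
      (((1 + ηa) * (1 + ηb) - αa * αb * (x ⬝ᵥ y)) / 4 : ℝ) := by
  simp only [Eplus, smul_kronecker, kronecker_smul, add_kronecker, kronecker_add,
    one_kronecker_one, Matrix.mul_add, Matrix.mul_smul, trace_add, trace_smul, mul_one,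
    trace_singletRho, trace_singletRho_mul_pauliDot_kronecker_pauliDot,
    trace_singletRho_mul_pauliDot_kronecker_one, trace_singletRho_mul_one_kronecker_pauliDot,
    smul_eq_mul]
  push_cast
  ring

theorem trace_singletRho_mul_Eplus_kronecker_one (η α : ℝ) (x : Fin 3 → ℝ) :
    trace (singletRho * (Eplus η α x ⊗ₖ (1 : Matrix (Fin 2) (Fin 2) ℂ))) = ((1 + η) / 2 : ℝ) := by
  simp only [Eplus, smul_kronecker, add_kronecker, one_kronecker_one, Matrix.mul_add,
    Matrix.mul_smul, trace_add, trace_smul, mul_one, trace_singletRho,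
    trace_singletRho_mul_pauliDot_kronecker_one, smul_eq_mul]
  push_cast
  ring

theorem trace_singletRho_mul_one_kronecker_Eplus (η α : ℝ) (y : Fin 3 → ℝ) :
    trace (singletRho * ((1 : Matrix (Fin 2) (Fin 2) ℂ) ⊗ₖ Eplus η α y)) = ((1 + η) / 2 : ℝ) := by
  simp only [Eplus, kronecker_smul, kronecker_add, one_kronecker_one, Matrix.mul_add,
    Matrix.mul_smul, trace_add, trace_smul, mul_one, trace_singletRho,
    trace_singletRho_mul_one_kronecker_pauliDot, smul_eq_mul]
  push_cast
  ring

theorem trace_singletRho_mul_CHop (ηa ηb αa αb : ℝ) (a a' b b' : Fin 3 → ℝ) :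
    trace (singletRho * CHop ηa ηb αa αb a a' b b') =
      ((-(αa * αb) * (a ⬝ᵥ b - a ⬝ᵥ b' + a' ⬝ᵥ b + a' ⬝ᵥ b') / 4 - |αa * αb| / 2 : ℝ) : ℂ) := by
  simp only [CHop, Matrix.mul_add, Matrix.mul_sub, Matrix.mul_smul, trace_add, trace_sub,
    trace_smul, mul_one, smul_eq_mul, trace_singletRho, trace_singletRho_mul_Eplus_kronecker_Eplus,
    trace_singletRho_mul_Eplus_kronecker_one, trace_singletRho_mul_one_kronecker_Eplus]
  push_cast
  ring

theorem trace_singletRho_mul_Bop (α φ : ℝ) :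
    trace (singletRho * Bop α φ) = ((α ^ 2 / 2 * (cos φ + sin φ - 1) : ℝ) : ℂ) := by
  rw [Bop, trace_singletRho_mul_CHop]
  congr 1
  simp only [dotProduct, Fin.sum_univ_three, mul_neg, abs_neg, abs_mul_self, Matrix.cons_val]
  ring

theorem cos_add_sin_le_sqrt_two (φ : ℝ) : cos φ + sin φ ≤ √2 :=
  le_sqrt_of_sq_le (by nlinarith [sin_sq_add_cos_sq φ, sq_nonneg (cos φ - sin φ)])

/-- For the spin singlet, `Tr(ρ·𝓑) = (α²/2)(cos φ + sin φ − 1)`; it is at most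
`(√2 − 1)·α²/2` for every `φ`, with equality at `φ = π/4`. -/
theorem singlet_CH_expectation (α φ : ℝ) :
    Matrix.trace (singletRho * Bop α φ)
      = ((α ^ 2 / 2 * (Real.cos φ + Real.sin φ - 1) : ℝ) : ℂ) ∧
    (Matrix.trace (singletRho * Bop α φ)).re ≤ (Real.sqrt 2 - 1) * α ^ 2 / 2 ∧
    Matrix.trace (singletRho * Bop α (Real.pi / 4))
      = (((Real.sqrt 2 - 1) * α ^ 2 / 2 : ℝ) : ℂ) := by
  refine ⟨trace_singletRho_mul_Bop α φ, ?_, ?_⟩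
  · rw [trace_singletRho_mul_Bop, Complex.ofReal_re]
    have := mul_le_mul_of_nonneg_left (sub_le_sub_right (cos_add_sin_le_sqrt_two φ) 1)
      (by positivity : 0 ≤ α ^ 2 / 2)
    linarith
  · rw [trace_singletRho_mul_Bop, cos_pi_div_four, sin_pi_div_four]
    congr 1
    ring
end

section
/- Let α, φ ∈ ℝ. Let ρ = |ψ⟩⟨ψ| on ℂ²⊗ℂ² with |ψ⟩ = (|01⟩ − |10⟩)/√2, and let 𝓑 be the generalized Clauser–Horne operator with bias η_a = η_b = 0, unsharpness α_a = α, α_b = −α, and directions a = (1,0,0), a' = (0,1,0), b = (cos φ, sin φ, 0), b' = (−sin φ, cos φ, 0). Writing ⟨X⟩ = Tr(ρ·X), the third cumulant κ₃ = ⟨𝓑³⟩ − 3⟨𝓑⟩⟨𝓑²⟩ + 2⟨𝓑⟩³ equals −(√2/8)·α⁶·(sin(φ + π/4) − sin(3φ − π/4)). -/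
open Matrix Kronecker

noncomputable section

/-- The third cumulant `κ₃ = ⟨𝓑³⟩ − 3⟨𝓑⟩⟨𝓑²⟩ + 2⟨𝓑⟩³` of the generalized CH
operator in the spin-singlet state, with `⟨X⟩ = Tr(ρ·X)`. -/
def kappa3 (α φ : ℝ) : ℂ :=
  Matrix.trace (singletRho * Bop α φ ^ 3)
    - 3 * Matrix.trace (singletRho * Bop α φ) * Matrix.trace (singletRho * Bop α φ ^ 2)
    + 2 * Matrix.trace (singletRho * Bop α φ) ^ 3

end


/-! With zero bias the one-party terms of `𝓑` cancel, leaving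
`𝓑 = (α_a α_b / 4) · S − |α_a α_b| / 2` with `S` the CHSH operator of the four directions.
The third cumulant ignores the shift and scales cubically, so `κ₃(𝓑) = −(α⁶/64) κ₃(S)`.
For the four coplanar directions of the statement, `S` only couples `|01⟩` and `|10⟩`:
`S = z |01⟩⟨10| + z̄ |10⟩⟨01|` with `z = 2(1 − i) e^{iφ}`. The singlet is an eigenvector of `S²`
with eigenvalue `|z|²` and `⟨S⟩ = −Re z`, whence `κ₃(S) = 2 Re z (Im z)²`. -/

section Cumulant

variable {R A : Type*} [CommRing R] [Ring A] [Algebra R A]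

def thirdCumulant (ω : A →ₗ[R] R) (X : A) : R :=
  ω (X ^ 3) - 3 * ω X * ω (X ^ 2) + 2 * ω X ^ 3

theorem thirdCumulant_smul_add_algebraMap (ω : A →ₗ[R] R) (hω : ω 1 = 1) (X : A) (c d : R) :
    thirdCumulant ω (c • X + algebraMap R A d) = c ^ 3 * thirdCumulant ω X := by
  have h2 : (c • X + algebraMap R A d) ^ 2 = c ^ 2 • X ^ 2 + (2 * c * d) • X + d ^ 2 • 1 := by
    simp only [Algebra.algebraMap_eq_smul_one, sq, add_mul, mul_add, smul_mul_smul, mul_one,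
      one_mul]
    module
  have h3 : (c • X + algebraMap R A d) ^ 3
      = c ^ 3 • X ^ 3 + (3 * c ^ 2 * d) • X ^ 2 + (3 * c * d ^ 2) • X + d ^ 3 • 1 := by
    rw [pow_succ, h2]
    simp only [Algebra.algebraMap_eq_smul_one, pow_succ, pow_zero, add_mul, mul_add,
      smul_mul_smul, mul_one, one_mul]
    module
  rw [thirdCumulant, thirdCumulant, h2, h3]
  simp only [map_add, map_smul, hω, Algebra.algebraMap_eq_smul_one, smul_eq_mul, mul_one]
  ring

end Cumulant

section VectorState

variable {n R : Type*} [Fintype n]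

def expectation [CommSemiring R] (ρ : Matrix n n R) : Matrix n n R →ₗ[R] R :=
  traceLinearMap n R R ∘ₗ LinearMap.mulLeft R ρ

theorem expectation_vecMulVec_apply [CommSemiring R] (u v : n → R) (X : Matrix n n R) :
    expectation (vecMulVec u v) X = v ⬝ᵥ X *ᵥ u := by
  rw [expectation, LinearMap.comp_apply, LinearMap.mulLeft_apply, traceLinearMap_apply,
    vecMulVec_mul, trace_vecMulVec, dotProduct_mulVec, dotProduct_comm]

theorem thirdCumulant_expectation_vecMulVec_of_sq_mulVec [DecidableEq n] [CommRing R]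
    (u v : n → R) (X : Matrix n n R) (r : R) (hvu : v ⬝ᵥ u = 1) (hX : X ^ 2 *ᵥ u = r • u) :
    thirdCumulant (expectation (vecMulVec u v)) X
      = 2 * (v ⬝ᵥ X *ᵥ u) * ((v ⬝ᵥ X *ᵥ u) ^ 2 - r) := by
  have hX3 : X ^ 3 *ᵥ u = r • X *ᵥ u := by
    rw [pow_succ', ← mulVec_mulVec, hX, mulVec_smul]
  simp only [thirdCumulant, expectation_vecMulVec_apply, hX, hX3, dotProduct_smul, hvu,
    smul_eq_mul]
  ring

end VectorState

def chshOp (a a' b b' : Fin 3 → ℝ) : Matrix (Fin 2 × Fin 2) (Fin 2 × Fin 2) ℂ :=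
  pauliDot a ⊗ₖ pauliDot b - pauliDot a ⊗ₖ pauliDot b' + pauliDot a' ⊗ₖ pauliDot b
    + pauliDot a' ⊗ₖ pauliDot b'

theorem CHop_zero_zero (αa αb : ℝ) (a a' b b' : Fin 3 → ℝ) :
    CHop 0 0 αa αb a a' b b'
      = ((αa * αb / 4 : ℝ) : ℂ) • chshOp a a' b b'
        + algebraMap ℂ _ ((-|αa * αb| / 2 : ℝ) : ℂ) := by
  simp only [CHop, Eplus, chshOp, add_kronecker, kronecker_add, smul_kronecker, kronecker_smul,
    one_kronecker_one, Algebra.algebraMap_eq_smul_one, add_zero, mul_one]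
  push_cast
  module

def exchangeOp (z : ℂ) : Matrix (Fin 2 × Fin 2) (Fin 2 × Fin 2) ℂ :=
  Matrix.of fun i j =>
    if i = (0, 1) ∧ j = (1, 0) then z else if i = (1, 0) ∧ j = (0, 1) then starRingEnd ℂ z else 0

theorem chshOp_eq_exchangeOp (φ : ℝ) :
    chshOp ![1, 0, 0] ![0, 1, 0] ![Real.cos φ, Real.sin φ, 0] ![-Real.sin φ, Real.cos φ, 0]
      = exchangeOp
          (2 * (Real.cos φ + Real.sin φ) + 2 * (Real.sin φ - Real.cos φ) * Complex.I) := by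
  ext ⟨i, j⟩ ⟨k, l⟩
  fin_cases i <;> fin_cases j <;> fin_cases k <;> fin_cases l <;>
  simp [chshOp, exchangeOp, pauliDot, σ1, σ2, σ3, kroneckerMap_apply, -Complex.ofReal_cos,
    -Complex.ofReal_sin, Complex.conj_ofReal, map_ofNat] <;>
  ring_nf <;> simp only [Complex.I_sq] <;> ring

theorem singletRho_eq_vecMulVec : singletRho = vecMulVec singletVec (star singletVec) := rfl

theorem inv_sqrt_two_mul_inv_sqrt_two : ((√2 : ℝ) : ℂ)⁻¹ * ((√2 : ℝ) : ℂ)⁻¹ = 1 / 2 := by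
  rw [← mul_inv, ← Complex.ofReal_mul, Real.mul_self_sqrt zero_le_two]
  norm_num

theorem star_singletVec_dotProduct_singletVec : star singletVec ⬝ᵥ singletVec = 1 := by
  norm_num [dotProduct, Fintype.sum_prod_type, singletVec, inv_sqrt_two_mul_inv_sqrt_two]

theorem star_singletVec_dotProduct_exchangeOp_mulVec (z : ℂ) :
    star singletVec ⬝ᵥ exchangeOp z *ᵥ singletVec = -z.re := by
  simp only [dotProduct, Pi.star_apply, singletVec, Fin.isValue, one_div, Complex.ofReal_inv,
    RCLike.star_def, mulVec, exchangeOp, of_apply, mul_ite, ite_mul, zero_mul, mul_neg, mul_zero,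
    Fintype.sum_prod_type, Prod.mk.injEq, Fin.sum_univ_two, zero_ne_one, and_false, ↓reduceIte,
    and_true, one_ne_zero, zero_add, add_zero, neg_zero, map_inv₀, Complex.conj_ofReal, map_neg,
    neg_mul]
  linear_combination (-(z + starRingEnd ℂ z)) * inv_sqrt_two_mul_inv_sqrt_two
    + Complex.re_eq_add_conj z

theorem exchangeOp_sq_mulVec_singletVec (z : ℂ) :
    exchangeOp z ^ 2 *ᵥ singletVec = (Complex.normSq z : ℂ) • singletVec := by
  ext ⟨i, j⟩
  fin_cases i <;> fin_cases j <;>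
  simp [sq, mulVec, dotProduct, mul_apply, Fintype.sum_prod_type, singletVec, exchangeOp] <;>
  first | exact Complex.mul_conj z | exact Complex.normSq_eq_conj_mul_self.symm

theorem expectation_singletRho_one : expectation singletRho 1 = 1 := by
  rw [singletRho_eq_vecMulVec, expectation_vecMulVec_apply, one_mulVec,
    star_singletVec_dotProduct_singletVec]

theorem thirdCumulant_singletRho_exchangeOp (z : ℂ) :
    thirdCumulant (expectation singletRho) (exchangeOp z) = ((2 * z.re * z.im ^ 2 : ℝ) : ℂ) := by
  rw [singletRho_eq_vecMulVec, thirdCumulant_expectation_vecMulVec_of_sq_mulVec _ _ _ _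
    star_singletVec_dotProduct_singletVec (exchangeOp_sq_mulVec_singletVec z),
    star_singletVec_dotProduct_exchangeOp_mulVec, Complex.normSq_apply]
  push_cast
  ring

theorem Real.sin_add_pi_div_four_sub_sin_three_mul_sub_pi_div_four (φ : ℝ) :
    sin (φ + Real.pi / 4) - sin (3 * φ - Real.pi / 4)
      = √2 * (cos φ + sin φ) * (sin φ - cos φ) ^ 2 := by
  rw [sin_add, sin_sub, sin_three_mul, cos_three_mul, sin_pi_div_four, cos_pi_div_four]
  linear_combination (√2 * (cos φ + sin φ)) * sin_sq_add_cos_sq φ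

/-- Third cumulant of the CH operator in the spin singlet:
`κ₃ = −(√2/8)·α⁶·(sin(φ + π/4) − sin(3φ − π/4))`. -/
theorem singlet_CH_third_cumulant (α φ : ℝ) :
    kappa3 α φ
      = ((-(Real.sqrt 2 / 8) * α ^ 6 *
          (Real.sin (φ + Real.pi / 4) - Real.sin (3 * φ - Real.pi / 4)) : ℝ) : ℂ) := by
  calc kappa3 α φ = thirdCumulant (expectation singletRho) (Bop α φ) := rfl
    _ = ((α * -α / 4 : ℝ) : ℂ) ^ 3 * thirdCumulant (expectation singletRho) (exchangeOp
          (2 * (Real.cos φ + Real.sin φ) + 2 * (Real.sin φ - Real.cos φ) * Complex.I)) := by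
      rw [Bop, CHop_zero_zero, chshOp_eq_exchangeOp,
        thirdCumulant_smul_add_algebraMap _ expectation_singletRho_one]
    _ = _ := by
      rw [thirdCumulant_singletRho_exchangeOp,
        Real.sin_add_pi_div_four_sub_sin_three_mul_sub_pi_div_four, ← Complex.ofReal_pow,
        ← Complex.ofReal_mul, Complex.ofReal_inj]
      simp only [Complex.add_re, Complex.add_im, Complex.sub_re, Complex.sub_im, Complex.mul_re,
        Complex.mul_im, Complex.ofReal_re, Complex.ofReal_im, Complex.re_ofNat, Complex.im_ofNat,
        Complex.I_re, Complex.I_im]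
      linear_combination α ^ 6 / 8 * (Real.cos φ + Real.sin φ) * (Real.sin φ - Real.cos φ) ^ 2
        * Real.sq_sqrt zero_le_two
end

section
/- Let α, a, t₁, t₂, t₃ ∈ ℝ and let ρ = (1/4)·(I⊗I + a·(σ₃⊗I) + a·(I⊗σ₃) + t₁·σ₁⊗σ₁ + t₂·σ₂⊗σ₂ + t₃·σ₃⊗σ₃) on ℂ²⊗ℂ². Let 𝓑 be the generalized Clauser–Horne operator with bias η_a = η_b = 0, unsharpness α_a = α, α_b = −α, and directions a⃗ = (0,0,1), a⃗' = (0,1,0), b⃗ = (0, 1/√2, −1/√2), b⃗' = (0, 1/√2, 1/√2). Then the fourth central moment μ₄ = Tr(ρ·(𝓑 − Tr(ρ·𝓑)·I)⁴) equals (α⁸/64)·(−3·(t₂ − t₃)⁴ + 4·(3·t₁ − 1)·(t₂ − t₃)² + 8·(1 + t₁)), independently of a. -/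
open Matrix Kronecker

noncomputable section

/-- The symmetric two-qubit X-state
`ρ = (I⊗I + a·σ₃⊗I + a·I⊗σ₃ + t₁·σ₁⊗σ₁ + t₂·σ₂⊗σ₂ + t₃·σ₃⊗σ₃)/4`. -/
def rhoX (a t1 t2 t3 : ℝ) : Matrix (Fin 2 × Fin 2) (Fin 2 × Fin 2) ℂ :=
  ((1 / 4 : ℝ) : ℂ) •
    ((1 : Matrix (Fin 2) (Fin 2) ℂ) ⊗ₖ (1 : Matrix (Fin 2) (Fin 2) ℂ)
      + (a : ℂ) • (σ3 ⊗ₖ (1 : Matrix (Fin 2) (Fin 2) ℂ))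
      + (a : ℂ) • ((1 : Matrix (Fin 2) (Fin 2) ℂ) ⊗ₖ σ3)
      + (t1 : ℂ) • (σ1 ⊗ₖ σ1) + (t2 : ℂ) • (σ2 ⊗ₖ σ2) + (t3 : ℂ) • (σ3 ⊗ₖ σ3))

/-- The generalized CH operator with bias `0`, unsharpness `α, −α`, and directions
`a⃗ = (0,0,1)`, `a⃗' = (0,1,0)`, `b⃗ = (0, 1/√2, −1/√2)`, `b⃗' = (0, 1/√2, 1/√2)`. -/
def BopX (α : ℝ) : Matrix (Fin 2 × Fin 2) (Fin 2 × Fin 2) ℂ :=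
  CHop 0 0 α (-α) ![0, 0, 1] ![0, 1, 0]
    ![0, 1 / Real.sqrt 2, -(1 / Real.sqrt 2)] ![0, 1 / Real.sqrt 2, 1 / Real.sqrt 2]

end

noncomputable section

/-- The fourth central moment `μ₄ = Tr(ρ·(𝓑 − Tr(ρ·𝓑)·I)⁴)` of the generalized CH
operator in the X-state. -/
def mu4X (α a t1 t2 t3 : ℝ) : ℂ :=
  Matrix.trace (rhoX a t1 t2 t3 *
    (BopX α - Matrix.trace (rhoX a t1 t2 t3 * BopX α) •
      (1 : Matrix (Fin 2 × Fin 2) (Fin 2 × Fin 2) ℂ)) ^ 4)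

/-! With zero bias and `α_b = −α`, the CH operator is `𝓑 = (α²/(2√2))·C − (α²/2)·I` with
`C = σ₃⊗σ₃ − σ₂⊗σ₂`. With `K = σ₁⊗σ₁`, the matrices `1, K, C` span a commutative algebra:
`K² = 1`, `CK = KC = C`, `C² = 2(1 + K)`. Hence `(C − d)⁴` is a combination of `1, K, C`,
whose expectations in `ρ` are `1, t₁, t₃ − t₂`; the parameter `a` only enters `ρ` through
`σ₃⊗I` and `I⊗σ₃`, which are trace-orthogonal to all three. -/

local notation "M₄" => Matrix (Fin 2 × Fin 2) (Fin 2 × Fin 2) ℂ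

theorem σ1_mul_σ1 : σ1 * σ1 = 1 := by
  ext i j; fin_cases i <;> fin_cases j <;> simp [σ1, Matrix.mul_apply]

theorem σ2_mul_σ2 : σ2 * σ2 = 1 := by
  ext i j; fin_cases i <;> fin_cases j <;> simp [σ2, Matrix.mul_apply]

theorem σ3_mul_σ3 : σ3 * σ3 = 1 := by
  ext i j; fin_cases i <;> fin_cases j <;> simp [σ3, Matrix.mul_apply]

theorem σ1_mul_σ2 : σ1 * σ2 = Complex.I • σ3 := by
  ext i j; fin_cases i <;> fin_cases j <;> simp [σ1, σ2, σ3, Matrix.mul_apply]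

theorem σ2_mul_σ1 : σ2 * σ1 = -Complex.I • σ3 := by
  ext i j; fin_cases i <;> fin_cases j <;> simp [σ1, σ2, σ3, Matrix.mul_apply]

theorem σ2_mul_σ3 : σ2 * σ3 = Complex.I • σ1 := by
  ext i j; fin_cases i <;> fin_cases j <;> simp [σ1, σ2, σ3, Matrix.mul_apply]

theorem σ3_mul_σ2 : σ3 * σ2 = -Complex.I • σ1 := by
  ext i j; fin_cases i <;> fin_cases j <;> simp [σ1, σ2, σ3, Matrix.mul_apply]

theorem σ3_mul_σ1 : σ3 * σ1 = Complex.I • σ2 := by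
  ext i j; fin_cases i <;> fin_cases j <;> simp [σ1, σ2, σ3, Matrix.mul_apply]

theorem σ1_mul_σ3 : σ1 * σ3 = -Complex.I • σ2 := by
  ext i j; fin_cases i <;> fin_cases j <;> simp [σ1, σ2, σ3, Matrix.mul_apply]

theorem trace_σ1 : trace σ1 = 0 := by simp [σ1, trace_fin_two]

theorem trace_σ2 : trace σ2 = 0 := by simp [σ2, trace_fin_two]

theorem trace_σ3 : trace σ3 = 0 := by simp [σ3, trace_fin_two]

def opK : M₄ := σ1 ⊗ₖ σ1

def opC : M₄ := σ3 ⊗ₖ σ3 - σ2 ⊗ₖ σ2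

theorem opK_mul_opK : opK * opK = 1 := by
  rw [opK, ← mul_kronecker_mul, σ1_mul_σ1, one_kronecker_one]

theorem opC_mul_opK : opC * opK = opC := by
  simp only [opC, opK, sub_mul, ← mul_kronecker_mul, σ3_mul_σ1, σ2_mul_σ1,
    smul_kronecker, kronecker_smul, smul_smul, neg_mul_neg, Complex.I_mul_I]
  module

theorem opK_mul_opC : opK * opC = opC := by
  simp only [opC, opK, mul_sub, ← mul_kronecker_mul, σ1_mul_σ3, σ1_mul_σ2,
    smul_kronecker, kronecker_smul, smul_smul, neg_mul_neg, Complex.I_mul_I]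
  module

theorem opC_mul_opC : opC * opC = (2 : ℂ) • (1 + opK) := by
  simp only [opC, opK, sub_mul, mul_sub, ← mul_kronecker_mul, σ3_mul_σ3, σ2_mul_σ2,
    σ3_mul_σ2, σ2_mul_σ3, one_kronecker_one, smul_kronecker, kronecker_smul, smul_smul,
    neg_mul_neg, Complex.I_mul_I]
  module

theorem sub_smul_one_pow_four {R A : Type*} [CommRing R] [Ring A] [Algebra R A] {C K : A}
    (hKK : K * K = 1) (hCK : C * K = C) (hKC : K * C = C) (hCC : C * C = (2 : R) • (1 + K))
    (d : R) :
    (C - d • 1) ^ 4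
      = (d ^ 4 + 12 * d ^ 2 + 8) • 1 + (12 * d ^ 2 + 8) • K - (4 * d ^ 3 + 16 * d) • C := by
  have hsq : (C - d • 1) ^ 2 = (d ^ 2 + 2) • 1 + (2 : R) • K - (2 * d) • C := by
    rw [sq]
    simp only [sub_mul, mul_sub, smul_mul_assoc, mul_smul_comm, mul_one, one_mul, hCC]
    module
  rw [show 4 = 2 * 2 from rfl, pow_mul, hsq, sq]
  simp only [add_mul, mul_add, sub_mul, mul_sub, smul_mul_assoc, mul_smul_comm, mul_one, one_mul,
    smul_smul, hCC, hCK, hKC, hKK]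
  module

theorem smul_sub_smul_one_sub_trace_mul {n R : Type*} [Fintype n] [DecidableEq n] [CommRing R]
    {ρ : Matrix n n R} (hρ : trace ρ = 1) (X : Matrix n n R) (c s : R) :
    c • X - s • 1 - trace (ρ * (c • X - s • 1)) • 1 = c • (X - trace (ρ * X) • 1) := by
  simp only [mul_sub, Matrix.mul_smul, mul_one, trace_sub, trace_smul, hρ, smul_eq_mul]
  module

section rhoX

variable (a t1 t2 t3 : ℝ)

theorem trace_rhoX_mul_kronecker (P Q : Matrix (Fin 2) (Fin 2) ℂ) :
    trace (rhoX a t1 t2 t3 * (P ⊗ₖ Q))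
      = (trace P * trace Q + a * (trace (σ3 * P) * trace Q + trace P * trace (σ3 * Q))
          + t1 * (trace (σ1 * P) * trace (σ1 * Q)) + t2 * (trace (σ2 * P) * trace (σ2 * Q))
          + t3 * (trace (σ3 * P) * trace (σ3 * Q))) / 4 := by
  simp only [rhoX, add_mul, smul_mul_assoc, ← mul_kronecker_mul, one_mul, trace_smul,
    trace_add, trace_kronecker, smul_eq_mul]
  push_cast
  ring

theorem trace_rhoX : trace (rhoX a t1 t2 t3) = 1 := by
  rw [← mul_one (rhoX a t1 t2 t3), ← one_kronecker_one, trace_rhoX_mul_kronecker]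
  norm_num [trace_σ1, trace_σ2, trace_σ3]

theorem trace_rhoX_mul_opK : trace (rhoX a t1 t2 t3 * opK) = t1 := by
  rw [opK, trace_rhoX_mul_kronecker]
  simp [σ1_mul_σ1, σ2_mul_σ1, σ3_mul_σ1, trace_σ1, trace_σ2, trace_σ3]
  ring

theorem trace_rhoX_mul_opC : trace (rhoX a t1 t2 t3 * opC) = t3 - t2 := by
  rw [opC, mul_sub, trace_sub, trace_rhoX_mul_kronecker, trace_rhoX_mul_kronecker]
  simp [σ2_mul_σ2, σ3_mul_σ3, σ1_mul_σ2, σ1_mul_σ3, σ2_mul_σ3, σ3_mul_σ2, trace_σ1, trace_σ2,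
    trace_σ3]
  ring

theorem trace_rhoX_mul_span_one_opK_opC (e₀ e₁ e₂ : ℂ) :
    trace (rhoX a t1 t2 t3 * (e₀ • 1 + e₁ • opK - e₂ • opC)) = e₀ + e₁ * t1 - e₂ * (t3 - t2) := by
  simp only [mul_sub, mul_add, Matrix.mul_smul, mul_one, trace_sub, trace_add, trace_smul,
    trace_rhoX, trace_rhoX_mul_opK, trace_rhoX_mul_opC, smul_eq_mul]

end rhoX

theorem BopX_eq (α : ℝ) :
    BopX α = ((α : ℂ) ^ 2 / (2 * Real.sqrt 2)) • opC - ((α : ℂ) ^ 2 / 2) • 1 := by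
  have habs : |α * -α| = α ^ 2 := by rw [mul_neg, abs_neg, ← sq, abs_pow, sq_abs]
  simp only [BopX, CHop, Eplus, pauliDot, opC, Matrix.cons_val]
  push_cast [habs]
  simp only [smul_add, add_kronecker, kronecker_add, smul_kronecker, kronecker_smul,
    one_kronecker_one, smul_smul, zero_smul, add_zero, zero_add]
  module

/-- Fourth central moment of the CH operator in the X-state:
`μ₄ = (α⁸/64)·(−3(t₂−t₃)⁴ + 4(3t₁−1)(t₂−t₃)² + 8(1+t₁))`, independently of `a`. -/
theorem xstate_CH_fourth_central_moment (α a t1 t2 t3 : ℝ) :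
    mu4X α a t1 t2 t3
      = ((α ^ 8 / 64 *
          (-3 * (t2 - t3) ^ 4 + 4 * (3 * t1 - 1) * (t2 - t3) ^ 2
            + 8 * (1 + t1)) : ℝ) : ℂ) := by
  have hscale : ((α : ℂ) ^ 2 / (2 * Real.sqrt 2)) ^ 4 = (α : ℂ) ^ 8 / 64 := by
    have hs4 : ((Real.sqrt 2 : ℝ) : ℂ) ^ 4 = 4 := by
      rw [show 4 = 2 * 2 from rfl, pow_mul]
      norm_cast
      norm_num
    rw [div_pow, mul_pow, hs4]
    ring
  rw [mu4X, BopX_eq, smul_sub_smul_one_sub_trace_mul (trace_rhoX a t1 t2 t3),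
    trace_rhoX_mul_opC, smul_pow, hscale,
    sub_smul_one_pow_four opK_mul_opK opC_mul_opK opK_mul_opC opC_mul_opC, Matrix.mul_smul,
    trace_smul, trace_rhoX_mul_span_one_opK_opC, smul_eq_mul]
  push_cast
  ring

end
end
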